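/- For a set of four pure qubit states {|φ_1⟩,…,|φ_4⟩} ⊂ ℂ² to be antidistinguishable it is necessary that there exist strictly positive reals α_1,…,α_4 with Σ_j α_j |φ_j⟩⟨φ_j| = I. The set {|0⟩, |1⟩, |+⟩, |i₊⟩} with |i₊⟩ = (|0⟩ + i|1⟩)/√2 admits no such positive decomposition of the identity, hence is not antidistinguishable. -/

import Mathlib

open Matrix Complex
open scoped ComplexOrder

noncomputable section

/-- Outer product `|v⟩⟨v|`. -/
def outer {n : Type*} [Fintype n] (v : n → ℂ) : Matrix n n ℂ := vecMulVec v (star v)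

/-- Expectation value `⟨v|M|v⟩`. -/
def expVal {n : Type*} [Fintype n] (M : Matrix n n ℂ) (v : n → ℂ) : ℂ := star v ⬝ᵥ (M *ᵥ v)

/-- Inner product `⟨v|w⟩`. -/
def ip {n : Type*} [Fintype n] (v w : n → ℂ) : ℂ := ∑ i, star (v i) * w i

/-- Strong antidistinguishability of a family of pure states in `ℂ^d`. -/
def PureAntidist {d n : ℕ} (φ : Fin n → (Fin d → ℂ)) : Prop :=
  ∃ P : Fin n → Matrix (Fin d) (Fin d) ℂ,
    (∀ j, (P j).PosSemidef) ∧
    (∑ j, P j) = 1 ∧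
    (∀ j, expVal (P j) (φ j) = 0) ∧
    (∀ j, 0 < (∑ i, expVal (P j) (φ i)).re)

/-- The states `|0⟩, |1⟩, |+⟩, |i₊⟩`. -/
def φ₀ : Fin 4 → (Fin 2 → ℂ) :=
  ![![1, 0], ![0, 1],
    ![(1 / Real.sqrt 2 : ℝ), (1 / Real.sqrt 2 : ℝ)],
    ![(1 / Real.sqrt 2 : ℝ), (1 / Real.sqrt 2 : ℝ) * Complex.I]]

/-!
A qubit effect `Π ≥ 0` with `⟨φ|Π|φ⟩ = 0` for a unit vector `φ` kills `φ` on both sides, and in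
dimension two this forces `Π = tr Π • (1 - |φ⟩⟨φ|)`. Summing over the outcomes of an
antidistinguishing measurement and taking traces gives `∑ tr Π_j = 2`, hence
`∑ tr Π_j • |φ_j⟩⟨φ_j| = 1`, with `tr Π_j > 0` because every outcome occurs. For `φ₀` the
off-diagonal entry of `∑ α_j • |φ₀ j⟩⟨φ₀ j|` is `(α 2 - i α 3) / 2`, so no positive `α` works.
-/

namespace Matrix

section CommRing

variable {R : Type*} [CommRing R]

theorem eq_zero_of_trace_eq_zero_of_mulVec_eq_zero_of_vecMul_eq_zero
    {N : Matrix (Fin 2) (Fin 2) R} {u v : Fin 2 → R} (huv : u ⬝ᵥ v = 1)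
    (htr : N.trace = 0) (hv : N *ᵥ v = 0) (hu : u ᵥ* N = 0) : N = 0 := by
  simp only [dotProduct, Fin.sum_univ_two] at huv
  rw [trace_fin_two] at htr
  have h0 := congrFun hv 0
  have h1 := congrFun hv 1
  have h0' := congrFun hu 0
  have h1' := congrFun hu 1
  simp only [mulVec, vecMul, dotProduct, Fin.sum_univ_two, Pi.zero_apply] at h0 h1 h0' h1'
  ext i j
  fin_cases i <;> fin_cases j <;> simp only [zero_apply, Fin.zero_eta, Fin.mk_one]
  · linear_combination -(N 0 0) * huv + u 0 * h0 - v 1 * h1' + u 1 * v 1 * htr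
  · linear_combination -(N 0 1) * huv + v 0 * h1' + u 1 * h0 - v 0 * u 1 * htr
  · linear_combination -(N 1 0) * huv + u 0 * h1 + v 1 * h0' - u 0 * v 1 * htr
  · linear_combination -(N 1 1) * huv - u 0 * h0 + v 1 * h1' + u 0 * v 0 * htr

theorem eq_trace_smul_one_sub_vecMulVec {M : Matrix (Fin 2) (Fin 2) R} {u v : Fin 2 → R}
    (huv : u ⬝ᵥ v = 1) (hv : M *ᵥ v = 0) (hu : u ᵥ* M = 0) :
    M = M.trace • (1 - vecMulVec v u) := by
  refine sub_eq_zero.mp <| eq_zero_of_trace_eq_zero_of_mulVec_eq_zero_of_vecMul_eq_zero huv ?_ ?_ ?_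
  · rw [trace_sub, trace_smul, trace_sub, trace_one, trace_vecMulVec, dotProduct_comm, huv]
    simp only [Fintype.card_fin, smul_eq_mul]
    ring
  · simp [sub_mulVec, smul_mulVec, vecMulVec_mulVec, huv, hv]
  · simp [vecMul_sub, vecMul_smul, vecMul_vecMulVec, huv, hu]

end CommRing

theorem dotProduct_star_self_eq_sum_normSq {n : Type*} [Fintype n] (v : n → ℂ) :
    star v ⬝ᵥ v = ((∑ i, normSq (v i) : ℝ) : ℂ) := by
  simp [dotProduct, normSq_eq_conj_mul_self]

theorem PosSemidef.eq_trace_smul_one_sub_outer {M : Matrix (Fin 2) (Fin 2) ℂ}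
    (hM : M.PosSemidef) {v : Fin 2 → ℂ} (hv : star v ⬝ᵥ v = 1) (h : expVal M v = 0) :
    M = M.trace • (1 - outer v) := by
  have hMv : M *ᵥ v = 0 := (hM.dotProduct_mulVec_zero_iff v).mp h
  have hvM : star v ᵥ* M = 0 := by
    rw [← hM.isHermitian.eq, ← star_mulVec, hMv, star_zero]
  exact eq_trace_smul_one_sub_vecMulVec hv hMv hvM

end Matrix

theorem PureAntidist.exists_pos_sum_smul_outer_eq_one {n : ℕ} {φ : Fin n → Fin 2 → ℂ}
    (hφ : ∀ j, star (φ j) ⬝ᵥ φ j = 1) (h : PureAntidist φ) :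
    ∃ α : Fin n → ℝ, (∀ j, 0 < α j) ∧ ∑ j, (α j : ℂ) • outer (φ j) = 1 := by
  obtain ⟨P, hPSD, hsum, hzero, hpos⟩ := h
  have hP j : P j = (P j).trace • (1 - outer (φ j)) :=
    (hPSD j).eq_trace_smul_one_sub_outer (hφ j) (hzero j)
  have htr_pos j : 0 < (P j).trace := by
    refine (hPSD j).trace_nonneg.lt_of_ne' fun h0 => ?_
    have := hpos j
    simp [(hPSD j).trace_eq_zero_iff.mp h0, expVal] at this
  have htr_real j : ((P j).trace.re : ℂ) = (P j).trace :=
    Complex.ext rfl (Complex.pos_iff.mp (htr_pos j)).2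
  have htr_sum : ∑ j, (P j).trace = 2 := by
    rw [← trace_sum, hsum, trace_one, Fintype.card_fin, Nat.cast_ofNat]
  refine ⟨fun j => (P j).trace.re, fun j => (Complex.pos_iff.mp (htr_pos j)).1, ?_⟩
  calc ∑ j, ((P j).trace.re : ℂ) • outer (φ j) = ∑ j, ((P j).trace • 1 - P j) := by
        refine Finset.sum_congr rfl fun j _ => ?_
        rw [htr_real j]
        linear_combination (norm := module) hP j
    _ = 1 := by
        rw [Finset.sum_sub_distrib, ← Finset.sum_smul, htr_sum, hsum, two_smul, add_sub_cancel_right]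

theorem ofReal_sqrt_two_inv_mul_self : ((√2 : ℝ) : ℂ)⁻¹ * ((√2 : ℝ) : ℂ)⁻¹ = 2⁻¹ := by
  rw [← mul_inv, ← ofReal_mul, Real.mul_self_sqrt zero_le_two, ofReal_ofNat]

theorem dotProduct_star_φ₀_self (j : Fin 4) : star (φ₀ j) ⬝ᵥ φ₀ j = 1 := by
  fin_cases j <;> simp [φ₀, dotProduct, ofReal_sqrt_two_inv_mul_self]
  · norm_num
  · linear_combination -I ^ 2 * ofReal_sqrt_two_inv_mul_self - 2⁻¹ * I_sq

theorem not_exists_pos_sum_smul_outer_φ₀_eq_one :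
    ¬ ∃ α : Fin 4 → ℝ, (∀ j, 0 < α j) ∧ ∑ j, (α j : ℂ) • outer (φ₀ j) = 1 := by
  rintro ⟨α, hα, hsum⟩
  have h01 : α 2 = 0 := by
    simpa [Fin.sum_univ_four, outer, φ₀, vecMulVec_apply, Matrix.sum_apply, ← mul_assoc]
      using congrArg re (congrFun (congrFun hsum 0) 1)
  exact (hα 2).ne' h01

/-- Antidistinguishability of four qubit pure states requires a strictly positive
decomposition of the identity; the set `{|0⟩, |1⟩, |+⟩, |i₊⟩}` admits none, hence is
not antidistinguishable. -/
theorem qubit_four_states_necessary_condition :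
    (∀ φ : Fin 4 → (Fin 2 → ℂ), (∀ j, ∑ i, Complex.normSq (φ j i) = 1) →
      PureAntidist φ →
      ∃ α : Fin 4 → ℝ, (∀ j, 0 < α j) ∧ (∑ j, ((α j : ℂ) • outer (φ j))) = 1) ∧
    (¬ ∃ α : Fin 4 → ℝ, (∀ j, 0 < α j) ∧ (∑ j, ((α j : ℂ) • outer (φ₀ j))) = 1) ∧
    ¬ PureAntidist φ₀ := by
  refine ⟨fun φ hφ => PureAntidist.exists_pos_sum_smul_outer_eq_one fun j => ?_,
    not_exists_pos_sum_smul_outer_φ₀_eq_one,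
    fun h => not_exists_pos_sum_smul_outer_φ₀_eq_one
      (h.exists_pos_sum_smul_outer_eq_one dotProduct_star_φ₀_self)⟩
  rw [dotProduct_star_self_eq_sum_normSq, hφ j, ofReal_one]
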